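/- arXiv:2008.06413 — 8 statements merged into one kernel-verified Lean document; each statement's English description precedes it below -/
import Mathlib

section
/- Let E be a real inner product space of finite dimension n ≥ 3 with orthonormal basis (e₁,…,eₙ), let h be a symmetric bilinear form on E, let T be a 4-linear form on E, and let λ ∈ ℝ. Set r(Y,Z) = Σᵢ T(eᵢ,Y,Z,eᵢ) and δ = (1/2)Σᵢ h(eᵢ,eᵢ). If 2T + h⊙g = λ·(g⊙g), then (1/2)h + (1/(n−2))r = (((n−1)λ − δ)/(n−2))·g. -/
open RealInnerProductSpace

/-- The inner product of a real inner product space, viewed as a symmetric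
bilinear form `g(X,Y) = ⟪X,Y⟫`. -/
noncomputable def gip {E : Type*} [NormedAddCommGroup E] [InnerProductSpace ℝ E] :
    E → E → ℝ := fun x y => ⟪x, y⟫

/-- The Kulkarni–Nomizu product of two bilinear forms. -/
def kn {E : Type*} (T₁ T₂ : E → E → ℝ) : E → E → E → E → ℝ :=
  fun X Y Z W =>
    T₁ X W * T₂ Y Z + T₁ Y Z * T₂ X W - T₁ X Z * T₂ Y W - T₁ Y W * T₂ X Z

lemma key_sum {E : Type*} [NormedAddCommGroup E] [InnerProductSpace ℝ E]
    {n : ℕ} (e : OrthonormalBasis (Fin n) ℝ E) (B : E →ₗ[ℝ] ℝ) (Y : E) :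
    ∑ i, ⟪e i, Y⟫ * B (e i) = B Y := by
  conv_rhs => rw [← e.sum_repr Y]
  rw [map_sum]
  refine Finset.sum_congr rfl fun i _ => ?_
  rw [map_smul, e.repr_apply_apply, smul_eq_mul]

theorem stmt_0 {E : Type*} [NormedAddCommGroup E] [InnerProductSpace ℝ E]
    {n : ℕ} (hn : 3 ≤ n) (e : OrthonormalBasis (Fin n) ℝ E)
    (h : E →ₗ[ℝ] E →ₗ[ℝ] ℝ) (hsymm : ∀ X Y : E, h X Y = h Y X)
    (T : E →ₗ[ℝ] E →ₗ[ℝ] E →ₗ[ℝ] E →ₗ[ℝ] ℝ) (lam : ℝ)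
    (r : E → E → ℝ) (hr : ∀ Y Z : E, r Y Z = ∑ i, T (e i) Y Z (e i))
    (δ : ℝ) (hδ : δ = (1 / 2) * ∑ i, h (e i) (e i))
    (hsol : ∀ X Y Z W : E,
      2 * T X Y Z W + kn (fun x y => h x y) gip X Y Z W
        = lam * kn (gip (E := E)) gip X Y Z W) :
    ∀ Y Z : E, (1 / 2) * h Y Z + (1 / ((n : ℝ) - 2)) * r Y Z
      = ((((n : ℝ) - 1) * lam - δ) / ((n : ℝ) - 2)) * ⟪Y, Z⟫ := by
  intro Y Z
  have hne : (n : ℝ) - 2 ≠ 0 := by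
    have : (3 : ℝ) ≤ (n : ℝ) := by exact_mod_cast hn
    linarith
  have hgd : ∀ i : Fin n, ⟪e i, e i⟫ = 1 := fun i => by
    rw [real_inner_self_eq_norm_sq, e.orthonormal.1 i]; norm_num
  have s1 : ∑ i : Fin n, ⟪e i, e i⟫ = (n : ℝ) := by
    simp [hgd]
  have s2 : ∑ i : Fin n, h (e i) Z * ⟪Y, e i⟫ = h Y Z := by
    have k := key_sum e (h.flip Z) Y
    simp only [LinearMap.flip_apply] at k
    rw [← k]
    refine Finset.sum_congr rfl fun i _ => ?_
    rw [real_inner_comm]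
    ring
  have s3 : ∑ i : Fin n, h Y (e i) * ⟪e i, Z⟫ = h Y Z := by
    rw [← key_sum e (h Y) Z]
    refine Finset.sum_congr rfl fun i _ => ?_
    ring
  have s4 : ∑ i : Fin n, ⟪e i, Z⟫ * ⟪Y, e i⟫ = ⟪Y, Z⟫ := by
    rw [← e.sum_inner_mul_inner Y Z]
    refine Finset.sum_congr rfl fun i _ => ?_
    ring
  have s5 : ∑ i : Fin n, ⟪Y, e i⟫ * ⟪e i, Z⟫ = ⟪Y, Z⟫ := e.sum_inner_mul_inner Y Z
  have hδ' : ∑ i : Fin n, h (e i) (e i) = 2 * δ := by rw [hδ]; ring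
  have Hsum : ∑ i : Fin n, (2 * T (e i) Y Z (e i)
        + kn (fun x y => h x y) gip (e i) Y Z (e i))
      = ∑ i : Fin n, lam * kn (gip (E := E)) gip (e i) Y Z (e i) :=
    Finset.sum_congr rfl fun i _ => hsol (e i) Y Z (e i)
  simp only [kn, gip] at Hsum
  have lhs2 : ∑ i : Fin n, (h (e i) (e i) * ⟪Y, Z⟫ + h Y Z * ⟪e i, e i⟫
        - h (e i) Z * ⟪Y, e i⟫ - h Y (e i) * ⟪e i, Z⟫)
      = (2 * δ) * ⟪Y, Z⟫ + h Y Z * (n : ℝ) - h Y Z - h Y Z := by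
    rw [Finset.sum_sub_distrib, Finset.sum_sub_distrib, Finset.sum_add_distrib,
      ← Finset.sum_mul, ← Finset.mul_sum, s1, s2, s3, hδ']
  have rhs2 : ∑ i : Fin n, (⟪e i, e i⟫ * ⟪Y, Z⟫ + ⟪Y, Z⟫ * ⟪e i, e i⟫
        - ⟪e i, Z⟫ * ⟪Y, e i⟫ - ⟪Y, e i⟫ * ⟪e i, Z⟫)
      = (n : ℝ) * ⟪Y, Z⟫ + ⟪Y, Z⟫ * (n : ℝ) - ⟪Y, Z⟫ - ⟪Y, Z⟫ := by
    rw [Finset.sum_sub_distrib, Finset.sum_sub_distrib, Finset.sum_add_distrib,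
      ← Finset.sum_mul, ← Finset.mul_sum, s1, s4, s5]
  have e1 : ∑ i : Fin n, (2 : ℝ) * T (e i) Y Z (e i) = 2 * r Y Z := by
    rw [← Finset.mul_sum, ← hr]
  rw [Finset.sum_add_distrib, e1, lhs2, ← Finset.mul_sum, rhs2] at Hsum
  have goal2 : ((n : ℝ) - 2) * ((1 / 2) * h Y Z) + r Y Z
      = (((n : ℝ) - 1) * lam - δ) * ⟪Y, Z⟫ := by linear_combination Hsum / 2
  have rearr : (1 / 2) * h Y Z + (1 / ((n : ℝ) - 2)) * r Y Z
      = (((n : ℝ) - 2) * ((1 / 2) * h Y Z) + r Y Z) / ((n : ℝ) - 2) := by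
    field_simp
  rw [rearr, goal2, div_mul_eq_mul_div]
end

section
/- Let E be a real inner product space of dimension n = 2 with orthonormal basis (e₁,e₂), let h be a symmetric bilinear form on E, let T be a 4-linear form on E, and let λ ∈ ℝ. Set r(Y,Z) = Σᵢ T(eᵢ,Y,Z,eᵢ) and δ = (1/2)Σᵢ h(eᵢ,eᵢ). If 2T + h⊙g = λ·(g⊙g), then r = (λ − δ)·g and Σᵢ r(eᵢ,eᵢ) = 2(λ − δ). -/
open RealInnerProductSpace

theorem stmt_2 {E : Type*} [NormedAddCommGroup E] [InnerProductSpace ℝ E]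
    (e : OrthonormalBasis (Fin 2) ℝ E)
    (h : E →ₗ[ℝ] E →ₗ[ℝ] ℝ) (hsymm : ∀ X Y : E, h X Y = h Y X)
    (T : E →ₗ[ℝ] E →ₗ[ℝ] E →ₗ[ℝ] E →ₗ[ℝ] ℝ) (lam : ℝ)
    (r : E → E → ℝ) (hr : ∀ Y Z : E, r Y Z = ∑ i, T (e i) Y Z (e i))
    (δ : ℝ) (hδ : δ = (1 / 2) * ∑ i, h (e i) (e i))
    (hsol : ∀ X Y Z W : E,
      2 * T X Y Z W + kn (fun x y => h x y) gip X Y Z W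
        = lam * kn (gip (E := E)) gip X Y Z W) :
    (∀ Y Z : E, r Y Z = (lam - δ) * ⟪Y, Z⟫) ∧
      ∑ i, r (e i) (e i) = 2 * (lam - δ) := by
  have horth := e.orthonormal
  have h00 : ⟪e 0, e 0⟫ = (1:ℝ) := by
    have := horth.1 0
    rw [@norm_eq_sqrt_real_inner] at this
    nlinarith [this, real_inner_self_nonneg (x := e 0),
      Real.sq_sqrt (real_inner_self_nonneg (x := e 0))]
  have h11 : ⟪e 1, e 1⟫ = (1:ℝ) := by
    have := horth.1 1
    rw [@norm_eq_sqrt_real_inner] at this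
    nlinarith [this, real_inner_self_nonneg (x := e 1),
      Real.sq_sqrt (real_inner_self_nonneg (x := e 1))]
  have key : ∀ Y Z : E, r Y Z = (lam - δ) * ⟪Y, Z⟫ := by
    intro Y Z
    have hT : ∀ X W : E, T X Y Z W =
        (lam * kn (gip (E := E)) gip X Y Z W - kn (fun x y => h x y) gip X Y Z W) / 2 := by
      intro X W; have := hsol X Y Z W; linarith
    have hinner : ⟪Y, e 0⟫ * ⟪Z, e 0⟫ + ⟪Y, e 1⟫ * ⟪Z, e 1⟫ = ⟪Y, Z⟫ := by
      have := e.sum_inner_mul_inner Y Z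
      rw [Fin.sum_univ_two] at this
      rw [real_inner_comm (e 0) Z, real_inner_comm (e 1) Z]
      exact this
    have hrepr : ∀ W V : E,
        h W (e 0) * ⟪V, e 0⟫ + h W (e 1) * ⟪V, e 1⟫ = h W V := by
      intro W V
      conv_rhs => rw [← e.sum_repr' V]
      rw [Fin.sum_univ_two]
      simp [real_inner_comm, mul_comm]
    have hδ2 : h (e 0) (e 0) + h (e 1) (e 1) = 2 * δ := by
      rw [hδ, Fin.sum_univ_two]; ring
    rw [hr, Fin.sum_univ_two, hT, hT]
    unfold kn gip
    simp only [h00, h11, hsymm (e 0) Z, hsymm (e 1) Z]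
    linear_combination (-lam) * hinner - (1/2) * ⟪Y, Z⟫ * hδ2
      + (1/2) * hrepr Z Y + (1/2) * hrepr Y Z + (1/2) * hsymm Z Y
      + (lam * ⟪Y, e 0⟫ - h Y (e 0)/2) * real_inner_comm (e 0) Z
      + (lam * ⟪Y, e 1⟫ - h Y (e 1)/2) * real_inner_comm (e 1) Z
  refine ⟨key, ?_⟩
  rw [Fin.sum_univ_two, key, key, h00, h11]
  ring
end

section
/- Let E be a real inner product space of finite dimension n ≥ 3 with orthonormal basis (e₁,…,eₙ), let h be a symmetric bilinear form on E, let T be a 4-linear form on E, and let λ ∈ ℝ. Set r(Y,Z) = Σᵢ T(eᵢ,Y,Z,eᵢ). If 2T + h⊙g = λ·(g⊙g) and Σᵢ h(eᵢ,eᵢ) = 0, then: (i) h + (2/(n−2))·r = 2((n−1)/(n−2))λ·g, and (ii) (1/2)·((n−2)h) + r = (n−1)λ·g; that is, ((n−2)h, (n−1)λ) satisfies the pointwise almost Ricci soliton equation. -/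
open RealInnerProductSpace

lemma aux_sum {E : Type*} [NormedAddCommGroup E] [InnerProductSpace ℝ E]
    {n : ℕ} (e : OrthonormalBasis (Fin n) ℝ E) (f : E →ₗ[ℝ] ℝ) (Y : E) :
    ∑ i, ⟪e i, Y⟫ * f (e i) = f Y := by
  conv_rhs => rw [← e.sum_repr Y]
  rw [map_sum]
  simp [OrthonormalBasis.repr_apply_apply, smul_eq_mul]

theorem stmt_3 {E : Type*} [NormedAddCommGroup E] [InnerProductSpace ℝ E]
    {n : ℕ} (hn : 3 ≤ n) (e : OrthonormalBasis (Fin n) ℝ E)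
    (h : E →ₗ[ℝ] E →ₗ[ℝ] ℝ) (hsymm : ∀ X Y : E, h X Y = h Y X)
    (T : E →ₗ[ℝ] E →ₗ[ℝ] E →ₗ[ℝ] E →ₗ[ℝ] ℝ) (lam : ℝ)
    (r : E → E → ℝ) (hr : ∀ Y Z : E, r Y Z = ∑ i, T (e i) Y Z (e i))
    (hsol : ∀ X Y Z W : E,
      2 * T X Y Z W + kn (fun x y => h x y) gip X Y Z W
        = lam * kn (gip (E := E)) gip X Y Z W)
    (htr : ∑ i, h (e i) (e i) = 0) :
    (∀ Y Z : E, h Y Z + (2 / ((n : ℝ) - 2)) * r Y Z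
        = 2 * (((n : ℝ) - 1) / ((n : ℝ) - 2)) * lam * ⟪Y, Z⟫) ∧
      (∀ Y Z : E, (1 / 2) * (((n : ℝ) - 2) * h Y Z) + r Y Z
        = ((n : ℝ) - 1) * lam * ⟪Y, Z⟫) := by
  have hii : ∀ i : Fin n, (⟪e i, e i⟫ : ℝ) = 1 := fun i => by
    simpa using (orthonormal_iff_ite.mp e.orthonormal) i i
  have key : ∀ Y Z : E,
      2 * r Y Z + ((n : ℝ) - 2) * h Y Z = 2 * ((n : ℝ) - 1) * lam * ⟪Y, Z⟫ := by
    intro Y Z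
    have s1 : ∑ i, ⟪Y, e i⟫ * ⟪e i, Z⟫ = ⟪Y, Z⟫ := e.sum_inner_mul_inner Y Z
    have s3 : ∑ i, ⟪e i, Y⟫ * h (e i) Z = h Y Z := by
      simpa using aux_sum e (h.flip Z) Y
    have s4 : ∑ i, ⟪e i, Z⟫ * h Y (e i) = h Y Z := aux_sum e (h Y) Z
    have hstep : ∑ i, (2 * T (e i) Y Z (e i))
        = ∑ i, (lam * (2 * ⟪Y, Z⟫) - lam * (2 * (⟪Y, e i⟫ * ⟪e i, Z⟫))
            - h (e i) (e i) * ⟪Y, Z⟫ - h Y Z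
            + ⟪e i, Y⟫ * h (e i) Z + ⟪e i, Z⟫ * h Y (e i)) := by
      refine Finset.sum_congr rfl fun i _ => ?_
      have hs := hsol (e i) Y Z (e i)
      simp only [kn, gip] at hs
      rw [hii i] at hs
      have c1 : (⟪Y, e i⟫ : ℝ) = ⟪e i, Y⟫ := real_inner_comm _ _
      have c2 : (⟪Z, e i⟫ : ℝ) = ⟪e i, Z⟫ := real_inner_comm _ _
      linear_combination hs + (h (e i)) Z * c1
    rw [← Finset.mul_sum, ← hr Y Z] at hstep
    simp only [Finset.sum_add_distrib, Finset.sum_sub_distrib, ← Finset.mul_sum,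
      ← Finset.sum_mul, Finset.sum_const, Finset.card_univ, Fintype.card_fin,
      nsmul_eq_mul, s1, s3, s4, htr] at hstep
    linear_combination hstep
  have hn2 : ((n : ℝ) - 2) ≠ 0 := by
    have : (3 : ℝ) ≤ (n : ℝ) := by exact_mod_cast hn
    linarith
  constructor
  · intro Y Z
    have k := key Y Z
    field_simp
    linear_combination k
  · intro Y Z
    linear_combination (1/2) * key Y Z
end

section
/- Let E be a real inner product space of finite dimension n ≥ 3 with orthonormal basis (e₁,…,eₙ), let h be a symmetric bilinear form on E, let T be a 4-linear form on E, and let λ ∈ ℝ. Set r(Y,Z) = Σᵢ T(eᵢ,Y,Z,eᵢ) and s = Σᵢ r(eᵢ,eᵢ). If 2T + h⊙g = λ·(g⊙g), then T − (1/(n−2))·(r⊙g) + (s/(2(n−1)(n−2)))·(g⊙g) = 0; that is, the algebraic Weyl part of T vanishes. -/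
open RealInnerProductSpace

theorem stmt_4 {E : Type*} [NormedAddCommGroup E] [InnerProductSpace ℝ E]
    {n : ℕ} (hn : 3 ≤ n) (e : OrthonormalBasis (Fin n) ℝ E)
    (h : E →ₗ[ℝ] E →ₗ[ℝ] ℝ) (hsymm : ∀ X Y : E, h X Y = h Y X)
    (T : E →ₗ[ℝ] E →ₗ[ℝ] E →ₗ[ℝ] E →ₗ[ℝ] ℝ) (lam : ℝ)
    (r : E → E → ℝ) (hr : ∀ Y Z : E, r Y Z = ∑ i, T (e i) Y Z (e i))
    (s : ℝ) (hs : s = ∑ i, r (e i) (e i))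
    (hsol : ∀ X Y Z W : E,
      2 * T X Y Z W + kn (fun x y => h x y) gip X Y Z W
        = lam * kn (gip (E := E)) gip X Y Z W) :
    ∀ X Y Z W : E,
      T X Y Z W - (1 / ((n : ℝ) - 2)) * kn r gip X Y Z W
        + (s / (2 * ((n : ℝ) - 1) * ((n : ℝ) - 2))) * kn (gip (E := E)) gip X Y Z W
      = 0 := by
  have hn3 : (3:ℝ) ≤ (n:ℝ) := by exact_mod_cast hn
  have hn1 : (n:ℝ) - 1 ≠ 0 := by nlinarith
  have hn2 : (n:ℝ) - 2 ≠ 0 := by nlinarith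
  set th := ∑ i, h (e i) (e i) with hth
  have hEE : ∀ i, ⟪e i, e i⟫ = (1:ℝ) := fun i => by
    rw [real_inner_self_eq_norm_sq, e.orthonormal.1 i]; norm_num
  have hT : ∀ X Y Z W : E, T X Y Z W =
      (lam * kn (gip (E := E)) gip X Y Z W - kn (fun x y => h x y) gip X Y Z W) / 2 := by
    intro X Y Z W
    have := hsol X Y Z W
    linarith
  have hexp1 : ∀ Y Z : E, ∑ i, h (e i) Z * ⟪Y, e i⟫ = h Y Z := by
    intro Y Z
    conv_rhs => rw [← e.sum_repr Y]
    simp [OrthonormalBasis.repr_apply_apply, real_inner_comm, mul_comm]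
  have hexp2 : ∀ Y Z : E, ∑ i, h Y (e i) * ⟪e i, Z⟫ = h Y Z := by
    intro Y Z
    rw [hsymm Y Z, ← hexp1 Z Y]
    apply Finset.sum_congr rfl
    intro i _
    rw [hsymm Y (e i), real_inner_comm]
  have hinner : ∀ Y Z : E, ∑ i, ⟪e i, Z⟫ * ⟪Y, e i⟫ = ⟪Y, Z⟫ := by
    intro Y Z
    rw [← e.sum_inner_mul_inner Y Z]
    apply Finset.sum_congr rfl
    intro i _
    rw [mul_comm]
  have hr' : ∀ Y Z : E, r Y Z =
      (lam * ((n:ℝ) - 1) - th / 2) * ⟪Y, Z⟫ - (((n:ℝ) - 2) / 2) * h Y Z := by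
    intro Y Z
    rw [hr]
    simp_rw [hT, kn, gip]
    rw [← Finset.sum_div]
    rw [Finset.sum_sub_distrib, ← Finset.mul_sum]
    rw [Finset.sum_sub_distrib, Finset.sum_sub_distrib, Finset.sum_add_distrib]
    rw [Finset.sum_sub_distrib, Finset.sum_sub_distrib, Finset.sum_add_distrib]
    simp_rw [hEE, one_mul, mul_one]
    rw [Finset.sum_const, Finset.card_univ, Fintype.card_fin, nsmul_eq_mul,
      Finset.sum_const, Finset.card_univ, Fintype.card_fin, nsmul_eq_mul,
      hinner, hexp1, hexp2, e.sum_inner_mul_inner Y Z, ← Finset.sum_mul, ← hth]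
    ring
  have hs' : s = lam * (n:ℝ) * ((n:ℝ) - 1) - ((n:ℝ) - 1) * th := by
    rw [hs]
    simp_rw [hr', hEE, mul_one]
    rw [Finset.sum_sub_distrib, Finset.sum_const, Finset.card_univ, Fintype.card_fin,
      nsmul_eq_mul, ← Finset.mul_sum, ← hth]
    ring
  intro X Y Z W
  rw [hT X Y Z W]
  simp only [kn, gip, hr', hs']
  field_simp
  ring
end

section
/- Let E be a real inner product space of finite dimension n ≥ 3 with orthonormal basis (e₁,…,eₙ), let h and r be symmetric bilinear forms on E, and let λ ∈ ℝ. If (1/2)h + (1/(n−2))r = ((n−1)λ/(n−2))·g and Σᵢ h(eᵢ,eᵢ) = 0, then |r|² = n(n−1)²λ² + ((n−2)²/4)·|h|². -/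
open RealInnerProductSpace

/-!
Solving the soliton equation for `r` gives `r = (n - 1) λ g - ((n - 2) / 2) h`. In the
expansion of `|r|²` the cross term is a multiple of `tr h = 0`, and `|g|² = n`.
-/

lemma eq_mul_inner_add_mul_of_soliton {E : Type*} [NormedAddCommGroup E]
    [InnerProductSpace ℝ E] {h r : E → E → ℝ} {m lam : ℝ} (hm : m - 2 ≠ 0)
    (hsol : ∀ Y Z : E, (1 / 2) * h Y Z + (1 / (m - 2)) * r Y Z
      = ((m - 1) * lam / (m - 2)) * ⟪Y, Z⟫) (Y Z : E) :
    r Y Z = (m - 1) * lam * ⟪Y, Z⟫ + (-(m - 2) / 2) * h Y Z := by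
  have h0 := hsol Y Z
  field_simp at h0 ⊢
  linear_combination h0

lemma Orthonormal.sum_sum_sq_mul_inner_add_mul {ι E : Type*} [Fintype ι]
    [NormedAddCommGroup E] [InnerProductSpace ℝ E] {e : ι → E} (he : Orthonormal ℝ e)
    (h : E → E → ℝ) (a b : ℝ) :
    ∑ i, ∑ j, (a * ⟪e i, e j⟫ + b * h (e i) (e j)) ^ 2
      = Fintype.card ι * a ^ 2 + 2 * a * b * ∑ i, h (e i) (e i)
        + b ^ 2 * ∑ i, ∑ j, h (e i) (e j) ^ 2 := by
  classical
  have hsq : ∀ i j, (a * ⟪e i, e j⟫ + b * h (e i) (e j)) ^ 2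
      = (if i = j then a ^ 2 + 2 * a * b * h (e i) (e j) else 0)
        + b ^ 2 * h (e i) (e j) ^ 2 := by
    intro i j
    rw [orthonormal_iff_ite.mp he i j]
    split_ifs <;> ring
  simp only [hsq, Finset.sum_add_distrib, ← Finset.mul_sum, Finset.sum_ite_eq,
    Finset.mem_univ, if_true, Finset.sum_const, Finset.card_univ, nsmul_eq_mul]

theorem stmt_5_general {E : Type*} [NormedAddCommGroup E] [InnerProductSpace ℝ E]
    {n : ℕ} (hn : 3 ≤ n) (e : OrthonormalBasis (Fin n) ℝ E)
    (h : E →ₗ[ℝ] E →ₗ[ℝ] ℝ)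
    (r : E →ₗ[ℝ] E →ₗ[ℝ] ℝ) (lam : ℝ)
    (hsol : ∀ Y Z : E, (1 / 2) * h Y Z + (1 / ((n : ℝ) - 2)) * r Y Z
      = (((n : ℝ) - 1) * lam / ((n : ℝ) - 2)) * ⟪Y, Z⟫)
    (htr : ∑ i, h (e i) (e i) = 0) :
    ∑ i, ∑ j, (r (e i) (e j)) ^ 2
      = (n : ℝ) * ((n : ℝ) - 1) ^ 2 * lam ^ 2
        + (((n : ℝ) - 2) ^ 2 / 4) * ∑ i, ∑ j, (h (e i) (e j)) ^ 2 := by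
  have hn2 : (n : ℝ) - 2 ≠ 0 := by
    have : (3 : ℝ) ≤ n := by exact_mod_cast hn
    linarith
  simp_rw [eq_mul_inner_add_mul_of_soliton hn2 hsol]
  rw [e.orthonormal.sum_sum_sq_mul_inner_add_mul (fun X Y => h X Y), htr, Fintype.card_fin]
  ring

theorem stmt_5 {E : Type*} [NormedAddCommGroup E] [InnerProductSpace ℝ E]
    {n : ℕ} (hn : 3 ≤ n) (e : OrthonormalBasis (Fin n) ℝ E)
    (h : E →ₗ[ℝ] E →ₗ[ℝ] ℝ) (hsymm : ∀ X Y : E, h X Y = h Y X)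
    (r : E →ₗ[ℝ] E →ₗ[ℝ] ℝ) (rsymm : ∀ X Y : E, r X Y = r Y X) (lam : ℝ)
    (hsol : ∀ Y Z : E, (1 / 2) * h Y Z + (1 / ((n : ℝ) - 2)) * r Y Z
      = (((n : ℝ) - 1) * lam / ((n : ℝ) - 2)) * ⟪Y, Z⟫)
    (htr : ∑ i, h (e i) (e i) = 0) :
    ∑ i, ∑ j, (r (e i) (e j)) ^ 2
      = (n : ℝ) * ((n : ℝ) - 1) ^ 2 * lam ^ 2
        + (((n : ℝ) - 2) ^ 2 / 4) * ∑ i, ∑ j, (h (e i) (e j)) ^ 2 :=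
  stmt_5_general hn e h r lam hsol htr
end

section
/- Let E be a real inner product space of finite dimension n ≥ 3 with orthonormal basis (e₁,…,eₙ), let h and r be symmetric bilinear forms on E, and let λ ∈ ℝ. If (1/2)h + (1/(n−2))r = ((n−1)λ/(n−2))·g and Σᵢ h(eᵢ,eᵢ) = 0, then |r|² ≥ n(n−1)²λ². -/
open RealInnerProductSpace

/-! Taking the trace of `a h + b r = c g` with `tr h = 0` gives `b tr r = n c`; Cauchy–Schwarz on
the diagonal then bounds `(tr r)²` by `n |r|²`. -/

theorem sq_sum_diag_le_card_mul_sum_sq {ι : Type*} [Fintype ι] (f : ι → ι → ℝ) :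
    (∑ i, f i i) ^ 2 ≤ Fintype.card ι * ∑ i, ∑ j, f i j ^ 2 := by
  have hdiag : ∑ i, f i i ^ 2 ≤ ∑ i, ∑ j, f i j ^ 2 :=
    Finset.sum_le_sum fun i _ =>
      Finset.single_le_sum (f := fun j => f i j ^ 2) (fun j _ => sq_nonneg _) (Finset.mem_univ i)
  calc (∑ i, f i i) ^ 2 ≤ Fintype.card ι * ∑ i, f i i ^ 2 := by
        simpa using sq_sum_le_card_mul_sum_sq (s := Finset.univ) (f := fun i => f i i)
    _ ≤ Fintype.card ι * ∑ i, ∑ j, f i j ^ 2 := by gcongr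

theorem OrthonormalBasis.mul_sum_diag_eq_of_add_eq_smul_inner
    {ι E : Type*} [Fintype ι] [NormedAddCommGroup E] [InnerProductSpace ℝ E]
    (e : OrthonormalBasis ι ℝ E) (h r : E → E → ℝ) (a b c : ℝ)
    (heq : ∀ Y Z : E, a * h Y Z + b * r Y Z = c * ⟪Y, Z⟫) (htr : ∑ i, h (e i) (e i) = 0) :
    b * ∑ i, r (e i) (e i) = Fintype.card ι * c := by
  have hdiag : ∀ i, b * r (e i) (e i) = c - a * h (e i) (e i) := fun i => by
    have := heq (e i) (e i)
    rw [real_inner_self_eq_norm_sq, e.orthonormal.1 i] at this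
    linarith
  rw [Finset.mul_sum, Finset.sum_congr rfl fun i _ => hdiag i, Finset.sum_sub_distrib,
    ← Finset.mul_sum, htr]
  simp

theorem stmt_6_general {E : Type*} [NormedAddCommGroup E] [InnerProductSpace ℝ E]
    {n : ℕ} (hn : 3 ≤ n) (e : OrthonormalBasis (Fin n) ℝ E)
    (h : E →ₗ[ℝ] E →ₗ[ℝ] ℝ)
    (r : E →ₗ[ℝ] E →ₗ[ℝ] ℝ) (lam : ℝ)
    (hsol : ∀ Y Z : E, (1 / 2) * h Y Z + (1 / ((n : ℝ) - 2)) * r Y Z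
      = (((n : ℝ) - 1) * lam / ((n : ℝ) - 2)) * ⟪Y, Z⟫)
    (htr : ∑ i, h (e i) (e i) = 0) :
    ∑ i, ∑ j, (r (e i) (e j)) ^ 2 ≥ (n : ℝ) * ((n : ℝ) - 1) ^ 2 * lam ^ 2 := by
  have hn' : (3 : ℝ) ≤ n := by exact_mod_cast hn
  have htrace : ∑ i, r (e i) (e i) = n * (n - 1) * lam := by
    have := e.mul_sum_diag_eq_of_add_eq_smul_inner (fun Y Z => h Y Z) (fun Y Z => r Y Z)
      _ _ _ hsol htr
    rw [Fintype.card_fin] at this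
    field_simp [show (n : ℝ) - 2 ≠ 0 by linarith] at this
    linarith
  have hcs := sq_sum_diag_le_card_mul_sum_sq fun i j => r (e i) (e j)
  rw [htrace, Fintype.card_fin] at hcs
  rw [ge_iff_le, ← mul_le_mul_iff_of_pos_left (by linarith : (0 : ℝ) < n)]
  calc (n : ℝ) * (n * (n - 1) ^ 2 * lam ^ 2) = (n * (n - 1) * lam) ^ 2 := by ring
    _ ≤ _ := hcs

theorem stmt_6 {E : Type*} [NormedAddCommGroup E] [InnerProductSpace ℝ E]
    {n : ℕ} (hn : 3 ≤ n) (e : OrthonormalBasis (Fin n) ℝ E)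
    (h : E →ₗ[ℝ] E →ₗ[ℝ] ℝ) (hsymm : ∀ X Y : E, h X Y = h Y X)
    (r : E →ₗ[ℝ] E →ₗ[ℝ] ℝ) (rsymm : ∀ X Y : E, r X Y = r Y X) (lam : ℝ)
    (hsol : ∀ Y Z : E, (1 / 2) * h Y Z + (1 / ((n : ℝ) - 2)) * r Y Z
      = (((n : ℝ) - 1) * lam / ((n : ℝ) - 2)) * ⟪Y, Z⟫)
    (htr : ∑ i, h (e i) (e i) = 0) :
    ∑ i, ∑ j, (r (e i) (e j)) ^ 2 ≥ (n : ℝ) * ((n : ℝ) - 1) ^ 2 * lam ^ 2 :=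
  stmt_6_general hn e h r lam hsol htr
end

section
/- Let E be a real inner product space of finite dimension n ≥ 3, let h and r be symmetric bilinear forms on E with (1/2)h + r = λ·g for some λ ∈ ℝ, and let T be a 4-linear form on E. Then the following are equivalent: (i) (1/2)·(h⊙g) + T = λ·(g⊙g); (ii) T = r⊙g; (iii) the conharmonic tensor H := T − (1/(n−2))·(r⊙g) satisfies H = ((n−3)/(n−2))·T. -/
open RealInnerProductSpace

theorem stmt_11 {E : Type*} [NormedAddCommGroup E] [InnerProductSpace ℝ E]
    [FiniteDimensional ℝ E] {n : ℕ} (hn : 3 ≤ n) (hdim : Module.finrank ℝ E = n)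
    (h : E →ₗ[ℝ] E →ₗ[ℝ] ℝ) (hsymm : ∀ X Y : E, h X Y = h Y X)
    (r : E →ₗ[ℝ] E →ₗ[ℝ] ℝ) (rsymm : ∀ X Y : E, r X Y = r Y X) (lam : ℝ)
    (hRic : ∀ X Y : E, (1 / 2) * h X Y + r X Y = lam * ⟪X, Y⟫)
    (T : E →ₗ[ℝ] E →ₗ[ℝ] E →ₗ[ℝ] E →ₗ[ℝ] ℝ) :
    List.TFAE
      [∀ X Y Z W : E,
        (1 / 2) * kn (fun x y => h x y) gip X Y Z W + T X Y Z W
          = lam * kn (gip (E := E)) gip X Y Z W,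
       ∀ X Y Z W : E, T X Y Z W = kn (fun x y => r x y) gip X Y Z W,
       ∀ X Y Z W : E,
        T X Y Z W - (1 / ((n : ℝ) - 2)) * kn (fun x y => r x y) gip X Y Z W
          = (((n : ℝ) - 3) / ((n : ℝ) - 2)) * T X Y Z W] := by
  have hne : ((n : ℝ) - 2) ≠ 0 := by
    have : (3 : ℝ) ≤ (n : ℝ) := by exact_mod_cast hn
    linarith
  tfae_have 1 → 2 := by
    intro h1 X Y Z W
    have e := h1 X Y Z W
    simp only [kn, gip] at e ⊢
    linear_combination e - ⟪Y, Z⟫ * hRic X W - ⟪X, W⟫ * hRic Y Z +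
      ⟪Y, W⟫ * hRic X Z + ⟪X, Z⟫ * hRic Y W
  tfae_have 2 → 1 := by
    intro h2 X Y Z W
    have e := h2 X Y Z W
    simp only [kn, gip] at e ⊢
    linear_combination e + ⟪Y, Z⟫ * hRic X W + ⟪X, W⟫ * hRic Y Z -
      ⟪Y, W⟫ * hRic X Z - ⟪X, Z⟫ * hRic Y W
  tfae_have 2 → 3 := by
    intro h2 X Y Z W
    rw [h2 X Y Z W]
    field_simp
    ring
  tfae_have 3 → 2 := by
    intro h3 X Y Z W
    have e := h3 X Y Z W
    field_simp at e
    linear_combination e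
  tfae_finish
end

section
/- Let E be a real inner product space of finite dimension n ≥ 3, let V, ζ ∈ E with V ≠ 0, let a, λ ∈ ℝ, set θ = g(V,·), ψ = g(ζ,·), h = 2a·g + ψ⊗θ + θ⊗ψ, r = [(n−1)(λ−2a) − ψ(V)]·g − ((n−2)/2)·(ψ⊗θ + θ⊗ψ), and let Rm : E × E × E → E be the trilinear map determined by 2·g(Rm(X,Y)Z, W) = λ·(g⊙g)(X,Y,Z,W) − (h⊙g)(X,Y,Z,W). If r(Rm(V,X)Y, Z) + r(Y, Rm(V,X)Z) = 0 for all X, Y, Z ∈ E, then either λ − 2a = ψ(V), or ψ(V)·V = |V|²·ζ. -/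
open RealInnerProductSpace

theorem stmt_14 {E : Type*} [NormedAddCommGroup E] [InnerProductSpace ℝ E]
    [FiniteDimensional ℝ E] {n : ℕ} (hn : 3 ≤ n) (hdim : Module.finrank ℝ E = n)
    (V ζ : E) (hV : V ≠ 0) (a lam : ℝ) (h r : E → E → ℝ)
    (hdef : ∀ X Y : E, h X Y = 2 * a * ⟪X, Y⟫ + ⟪ζ, X⟫ * ⟪V, Y⟫ + ⟪V, X⟫ * ⟪ζ, Y⟫)
    (rdef : ∀ X Y : E,
      r X Y = (((n : ℝ) - 1) * (lam - 2 * a) - ⟪ζ, V⟫) * ⟪X, Y⟫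
        - (((n : ℝ) - 2) / 2) * (⟪ζ, X⟫ * ⟪V, Y⟫ + ⟪V, X⟫ * ⟪ζ, Y⟫))
    (Rm : E → E → E → E)
    (hRm : ∀ X Y Z W : E,
      2 * ⟪Rm X Y Z, W⟫
        = lam * kn (gip (E := E)) gip X Y Z W - kn h gip X Y Z W)
    (hsemi : ∀ X Y Z : E, r (Rm V X Y) Z + r Y (Rm V X Z) = 0) :
    lam - 2 * a = ⟪ζ, V⟫ ∨ (⟪ζ, V⟫ : ℝ) • V = ‖V‖ ^ 2 • ζ := by
  by_cases hk : lam - 2 * a = ⟪ζ, V⟫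
  · exact Or.inl hk
  right
  have hk' : lam - 2 * a - ⟪ζ, V⟫ ≠ 0 := sub_ne_zero.mpr hk
  have hv : (⟪V, V⟫ : ℝ) ≠ 0 := by
    simpa using (inner_self_ne_zero (𝕜 := ℝ)).mpr hV
  have hb : ((n : ℝ) - 2) / 2 ≠ 0 := by
    have : (3 : ℝ) ≤ (n : ℝ) := by exact_mod_cast hn
    intro hc
    have : (n : ℝ) = 2 := by linarith [div_eq_zero_iff.mp hc]
    linarith
  have key : ∀ X : E, ⟪ζ, V⟫ * ⟪V, X⟫ - ⟪V, V⟫ * ⟪ζ, X⟫ = 0 := by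
    intro X
    have hA := hRm V X V V
    have hB := hRm V X V ζ
    simp only [kn, gip, hdef] at hA hB
    have hAval : (⟪Rm V X V, V⟫ : ℝ) = 0 := by
      rw [real_inner_comm V X] at hA
      linear_combination (1/2 : ℝ) * hA
    have hBval : (⟪Rm V X V, ζ⟫ : ℝ)
        = (lam - 2 * a - ⟪ζ, V⟫) * (⟪ζ, V⟫ * ⟪V, X⟫ - ⟪V, V⟫ * ⟪ζ, X⟫) := by
      rw [real_inner_comm V X, real_inner_comm ζ X, real_inner_comm ζ V] at hB
      linear_combination (1/2 : ℝ) * hB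
    have h1 := hsemi X V V
    rw [rdef, rdef, real_inner_comm (Rm V X V) ζ, real_inner_comm (Rm V X V) V] at h1
    rw [hAval, hBval] at h1
    have hfac : (((n : ℝ) - 2) / 2) * (⟪V, V⟫ *
        ((lam - 2 * a - ⟪ζ, V⟫) * (⟪ζ, V⟫ * ⟪V, X⟫ - ⟪V, V⟫ * ⟪ζ, X⟫))) = 0 := by
      linear_combination (-1 / 2 : ℝ) * h1
    rcases mul_eq_zero.mp hfac with hc | hc
    · exact absurd hc hb
    rcases mul_eq_zero.mp hc with hc | hc
    · exact absurd hc hv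
    rcases mul_eq_zero.mp hc with hc | hc
    · exact absurd hc hk'
    exact hc
  have hw : ((⟪ζ, V⟫ : ℝ) • V - (⟪V, V⟫ : ℝ) • ζ : E) = 0 := by
    rw [← @inner_self_eq_zero ℝ]
    have := key ((⟪ζ, V⟫ : ℝ) • V - (⟪V, V⟫ : ℝ) • ζ)
    simp only [inner_sub_left, inner_sub_right, real_inner_smul_left,
      real_inner_smul_right] at this ⊢
    nlinarith [this, key V, key ζ]
  have := sub_eq_zero.mp hw
  rw [← real_inner_self_eq_norm_sq]
  exact this
end
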